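/- Let G be a finite group, H ≤ G a subgroup, x_1 = 1, x_2, …, x_s a complete set of representatives for the double cosets of H in G, and let U and V be non-isomorphic irreducible finite-dimensional complex representations of G. Then ∑_{j=1}^s |H ∩ x_j H x_j⁻¹| · χ_U(q_j^∨) · χ_V(q_j) = 0, where q_j := (1/|H|) · ∑_{y ∈ Hx_jH} y and q_j^∨ := (1/|H|) · ∑_{y ∈ Hx_jH} y⁻¹. -/
import Mathlib


open scoped Classical

/-- The double coset `HxH` as a finset. -/
noncomputable def dosetFinset {G : Type*} [Group G] [Fintype G] (H : Subgroup G) (x : G) :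
    Finset G :=
  {y : G | ∃ h ∈ H, ∃ h' ∈ H, y = h * x * h'}.toFinset

/-- `|H ∩ xHx⁻¹|`. -/
noncomputable def interConjCard {G : Type*} [Group G] [Fintype G] (H : Subgroup G) (x : G) :
    ℕ :=
  Nat.card {g : G // g ∈ H ∧ ∃ h ∈ H, g = x * h * x⁻¹}

/-- The character of a finite-dimensional representation. -/
noncomputable def repChar {G V : Type*} [Group G] [AddCommGroup V] [Module ℂ V]
    (ρ : Representation ℂ G V) (g : G) : ℂ :=
  LinearMap.trace ℂ V (ρ g)

/-- Irreducibility: `V` is nonzero and has no proper nonzero `G`-invariant subspace. -/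
def IsIrreducibleRep {G V : Type*} [Group G] [AddCommGroup V] [Module ℂ V]
    (ρ : Representation ℂ G V) : Prop :=
  Nontrivial V ∧ ∀ W : Submodule ℂ V, (∀ g : G, ∀ v ∈ W, ρ g v ∈ W) → W = ⊥ ∨ W = ⊤

section Aux

variable {G : Type*} [Group G] [Fintype G]

lemma mem_dosetFinset {H : Subgroup G} {x y : G} :
    y ∈ dosetFinset H x ↔ ∃ h ∈ H, ∃ h' ∈ H, y = h * x * h' := by
  simp [dosetFinset, Set.mem_toFinset]

lemma fiber_card (H : Subgroup G) (x z : G) (hz : z ∈ dosetFinset H x) :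
    (Finset.univ.filter (fun p : H × H => (p.1 : G) * x * (p.2 : G) = z)).card
      = interConjCard H x := by
  obtain ⟨h₀, h₀m, h₀', h₀'m, rfl⟩ := mem_dosetFinset.mp hz
  rw [← Fintype.card_subtype, interConjCard, ← Nat.card_eq_fintype_card]
  refine Nat.card_congr ?_
  refine
    { toFun := fun p => ⟨h₀⁻¹ * (p.1.1 : G), ?_, ⟨x⁻¹ * (h₀⁻¹ * (p.1.1 : G)) * x, ?_, by group⟩⟩
      invFun := fun u => ⟨(⟨h₀ * u.1, H.mul_mem h₀m u.2.1⟩,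
        ⟨x⁻¹ * (u.1)⁻¹ * x * h₀', ?_⟩), ?_⟩
      left_inv := ?_
      right_inv := ?_ }
  · exact H.mul_mem (H.inv_mem h₀m) p.1.1.2
  · -- x⁻¹ * (h₀⁻¹ * p.1.1) * x ∈ H
    have heq : (p.1.1 : G) * x * (p.1.2 : G) = h₀ * x * h₀' := p.2
    have hh : (p.1.1 : G) = h₀ * x * h₀' * (p.1.2 : G)⁻¹ * x⁻¹ := by
      calc (p.1.1 : G) = (p.1.1 : G) * x * (p.1.2 : G) * (p.1.2 : G)⁻¹ * x⁻¹ := by group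
        _ = h₀ * x * h₀' * (p.1.2 : G)⁻¹ * x⁻¹ := by rw [heq]
    have : x⁻¹ * (h₀⁻¹ * (p.1.1 : G)) * x = h₀' * (p.1.2 : G)⁻¹ := by rw [hh]; group
    rw [this]
    exact H.mul_mem h₀'m (H.inv_mem p.1.2.2)
  · -- x⁻¹ * u⁻¹ * x * h₀' ∈ H
    obtain ⟨hu, h, hm, hEq⟩ := u.2
    rw [hEq]
    have : x⁻¹ * (x * h * x⁻¹)⁻¹ * x * h₀' = h⁻¹ * h₀' := by group
    rw [this]
    exact H.mul_mem (H.inv_mem hm) h₀'m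
  · -- fiber equation
    show (h₀ * u.1) * x * (x⁻¹ * (u.1)⁻¹ * x * h₀') = h₀ * x * h₀'
    group
  · rintro ⟨⟨h, h'⟩, hp⟩
    have heq : (h : G) * x * (h' : G) = h₀ * x * h₀' := hp
    ext
    · show h₀ * (h₀⁻¹ * (h : G)) = (h : G)
      group
    · show x⁻¹ * (h₀⁻¹ * (h : G))⁻¹ * x * h₀' = (h' : G)
      have h2 : (h' : G) = x⁻¹ * (h:G)⁻¹ * (h₀ * x * h₀') := by
        calc (h' : G) = x⁻¹ * (h:G)⁻¹ * ((h:G) * x * (h':G)) := by group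
          _ = x⁻¹ * (h:G)⁻¹ * (h₀ * x * h₀') := by rw [heq]
      rw [h2]; group
  · rintro ⟨u, hu⟩
    ext
    show h₀⁻¹ * (h₀ * u) = u
    group

lemma doset_double_sum (H : Subgroup G) (x : G) (f : G → ℂ) :
    ∑ h : H, ∑ h' : H, f ((h : G) * x * (h' : G))
      = (interConjCard H x : ℂ) * ∑ z ∈ dosetFinset H x, f z := by
  have hsplit : ∑ h : H, ∑ h' : H, f ((h : G) * x * (h' : G))
      = ∑ p : H × H, f ((p.1 : G) * x * (p.2 : G)) :=
    (Fintype.sum_prod_type (fun p : H × H => f ((p.1 : G) * x * (p.2 : G)))).symm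
  rw [hsplit]
  have hmaps : ∀ p : H × H, p ∈ Finset.univ → (p.1 : G) * x * (p.2 : G) ∈ dosetFinset H x :=
    fun p _ => mem_dosetFinset.mpr ⟨p.1, p.1.2, p.2, p.2.2, rfl⟩
  rw [← Finset.sum_fiberwise_of_maps_to hmaps (fun p : H × H => f ((p.1 : G) * x * (p.2 : G)))]
  rw [Finset.mul_sum]
  refine Finset.sum_congr rfl fun z hz => ?_
  have : ∀ p ∈ Finset.univ.filter (fun p : H × H => (p.1 : G) * x * (p.2 : G) = z),
      f ((p.1 : G) * x * (p.2 : G)) = f z := by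
    intro p hp
    rw [(Finset.mem_filter.mp hp).2]
  rw [Finset.sum_congr rfl this, Finset.sum_const, fiber_card H x z hz, nsmul_eq_mul]

lemma doset_sum_invariant (H : Subgroup G) (x : G) {a b : G} (ha : a ∈ H) (hb : b ∈ H)
    (f : G → ℂ) :
    ∑ h : H, ∑ h' : H, f ((h : G) * (a * x * b) * (h' : G))
      = ∑ h : H, ∑ h' : H, f ((h : G) * x * (h' : G)) := by
  refine Fintype.sum_equiv (Equiv.mulRight (⟨a, ha⟩ : H)) _ _ (fun h => ?_)
  refine Fintype.sum_equiv (Equiv.mulLeft (⟨b, hb⟩ : H)) _ _ (fun h' => ?_)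
  simp only [Equiv.coe_mulRight, Equiv.coe_mulLeft]
  congr 1
  push_cast
  group

lemma doset_partition (H : Subgroup G) (s : ℕ) (x : Fin s → G)
    (hreps : ∀ g : G, ∃! i : Fin s, ∃ h ∈ H, ∃ h' ∈ H, g = h * x i * h')
    (F : G → ℂ) :
    ∑ j : Fin s, ∑ y ∈ dosetFinset H (x j), F y = ∑ g : G, F g := by
  have hfib := Finset.sum_fiberwise (Finset.univ : Finset G)
    (fun g => (hreps g).choose) F
  rw [← hfib]
  refine Finset.sum_congr rfl fun j _ => ?_
  congr 1
  ext g
  simp only [Finset.mem_filter, Finset.mem_univ, true_and, mem_dosetFinset]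
  constructor
  · intro hg
    exact ((hreps g).choose_spec.2 j hg).symm
  · rintro rfl
    exact (hreps g).choose_spec.1

lemma repChar_mul_comm {V : Type*} [AddCommGroup V] [Module ℂ V] [FiniteDimensional ℂ V]
    (ρ : Representation ℂ G V) (a b : G) :
    repChar ρ (a * b) = repChar ρ (b * a) := by
  unfold repChar
  rw [show ρ (a * b) = ρ a * ρ b from map_mul ρ a b,
    show ρ (b * a) = ρ b * ρ a from map_mul ρ b a, LinearMap.trace_mul_comm]

lemma schur_sum_zero {U V : Type*}
    [AddCommGroup U] [Module ℂ U] [FiniteDimensional ℂ U]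
    [AddCommGroup V] [Module ℂ V] [FiniteDimensional ℂ V]
    (ρU : Representation ℂ G U) (hirrU : IsIrreducibleRep ρU)
    (ρV : Representation ℂ G V) (hirrV : IsIrreducibleRep ρV)
    (hniso : ¬ ∃ f : U ≃ₗ[ℂ] V, ∀ (g : G) (u : U), f (ρU g u) = ρV g (f u))
    (T : V →ₗ[ℂ] U) :
    (∑ g : G, ρU g⁻¹ ∘ₗ T ∘ₗ ρV g) = 0 := by
  set S : V →ₗ[ℂ] U := ∑ g : G, ρU g⁻¹ ∘ₗ T ∘ₗ ρV g with hS
  have hint : ∀ (h : G) (v : V), S (ρV h v) = ρU h (S v) := by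
    intro h v
    have h1 : S (ρV h v) = ∑ g : G, ρU g⁻¹ (T (ρV (g * h) v)) := by
      simp [hS, LinearMap.sum_apply, map_mul, Module.End.mul_apply]
    rw [h1]
    have h2 : ρU h (S v) = ∑ g : G, ρU (h * g⁻¹) (T (ρV g v)) := by
      simp [hS, LinearMap.sum_apply, map_sum, map_mul, Module.End.mul_apply]
    rw [h2]
    refine Fintype.sum_equiv (Equiv.mulRight h) _ _ (fun g => ?_)
    simp [mul_assoc]
  have hker : ∀ g : G, ∀ v ∈ LinearMap.ker S, ρV g v ∈ LinearMap.ker S := by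
    intro g v hv
    simp only [LinearMap.mem_ker] at hv ⊢
    rw [hint, hv, map_zero]
  have hrange : ∀ g : G, ∀ u ∈ LinearMap.range S, ρU g u ∈ LinearMap.range S := by
    rintro g u ⟨v, rfl⟩
    exact ⟨ρV g v, hint g v⟩
  rcases hirrV.2 _ hker with hk | hk
  · rcases hirrU.2 _ hrange with hr | hr
    · exact LinearMap.range_eq_bot.mp hr
    · exfalso
      have hbij : Function.Bijective S :=
        ⟨LinearMap.ker_eq_bot.mp hk, LinearMap.range_eq_top.mp hr⟩
      set e := LinearEquiv.ofBijective S hbij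
      refine hniso ⟨e.symm, fun g u => ?_⟩
      have : ρU g u = S (ρV g (e.symm u)) := by
        rw [hint]
        congr 1
        exact (e.apply_symm_apply u).symm
      rw [this]
      exact e.symm_apply_apply _
  · exact LinearMap.ker_eq_top.mp hk

lemma char_twisted_orthogonal {U V : Type*}
    [AddCommGroup U] [Module ℂ U] [FiniteDimensional ℂ U]
    [AddCommGroup V] [Module ℂ V] [FiniteDimensional ℂ V]
    (ρU : Representation ℂ G U) (hirrU : IsIrreducibleRep ρU)
    (ρV : Representation ℂ G V) (hirrV : IsIrreducibleRep ρV)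
    (hniso : ¬ ∃ f : U ≃ₗ[ℂ] V, ∀ (g : G) (u : U), f (ρU g u) = ρV g (f u))
    (c : G) :
    ∑ g : G, repChar ρU (g⁻¹ * c) * repChar ρV g = 0 := by
  classical
  have hschur := schur_sum_zero ρU hirrU ρV hirrV hniso
  let bU := Module.finBasis ℂ U
  let bV := Module.finBasis ℂ V
  set MU : G → Matrix _ _ ℂ := fun g => LinearMap.toMatrix bU bU (ρU g) with hMU
  set MV : G → Matrix _ _ ℂ := fun g => LinearMap.toMatrix bV bV (ρV g) with hMV
  have hzero : ∀ (a i : Fin (Module.finrank ℂ U)) (k b : Fin (Module.finrank ℂ V)),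
      ∑ g : G, MU g⁻¹ a i * MV g k b = 0 := by
    intro a i k b
    have h0 := hschur (Matrix.toLin bV bU (Matrix.single i k (1:ℂ)))
    have h1 : ∑ g : G, MU g⁻¹ * Matrix.single i k (1:ℂ) * MV g
        = (0 : Matrix _ _ ℂ) := by
      have := congrArg (LinearMap.toMatrix bV bU) h0
      rw [map_sum, map_zero] at this
      rw [← this]
      refine Finset.sum_congr rfl fun g _ => ?_
      rw [LinearMap.toMatrix_comp bV bU bU, LinearMap.toMatrix_comp bV bV bU,
        LinearMap.toMatrix_toLin, Matrix.mul_assoc]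
    have h2 := congrFun (congrFun h1 a) b
    rw [Matrix.sum_apply, Matrix.zero_apply] at h2
    rw [← h2]
    refine Finset.sum_congr rfl fun g _ => ?_
    simp [Matrix.mul_apply, Matrix.single, Finset.sum_ite_eq,
      ite_and, Finset.mul_sum, Finset.sum_mul]
  set N : Matrix _ _ ℂ := ∑ g : G, Matrix.trace (MV g) • MU g⁻¹ with hN
  have hN0 : N = 0 := by
    ext a i
    rw [hN, Matrix.sum_apply, Matrix.zero_apply]
    simp only [Matrix.smul_apply, smul_eq_mul, Matrix.trace, Matrix.diag, Finset.sum_mul]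
    rw [Finset.sum_comm]
    refine Finset.sum_eq_zero fun k _ => ?_
    rw [← hzero a i k k]
    exact Finset.sum_congr rfl fun g _ => mul_comm _ _
  have hrepU : ∀ g : G, repChar ρU (g⁻¹ * c) = Matrix.trace (MU c * MU g⁻¹) := by
    intro g
    rw [repChar, LinearMap.trace_eq_matrix_trace ℂ bU, map_mul,
      LinearMap.toMatrix_mul, Matrix.trace_mul_comm]
  have hrepV : ∀ g : G, repChar ρV g = Matrix.trace (MV g) := fun g =>
    LinearMap.trace_eq_matrix_trace ℂ bV _
  calc ∑ g : G, repChar ρU (g⁻¹ * c) * repChar ρV g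
      = ∑ g : G, Matrix.trace (MU c * (Matrix.trace (MV g) • MU g⁻¹)) := by
        refine Finset.sum_congr rfl fun g _ => ?_
        rw [hrepU, hrepV, Matrix.mul_smul, Matrix.trace_smul, smul_eq_mul, mul_comm]
    _ = Matrix.trace (MU c * N) := by rw [hN, Matrix.mul_sum, Matrix.trace_sum]
    _ = 0 := by rw [hN0, Matrix.mul_zero, Matrix.trace_zero]

end Aux

/-- orthogonality relation for non-isomorphic irreducible representations `U, V`:
`∑_j |H ∩ x_j H x_j⁻¹| · χ_U(q_j^∨) · χ_V(q_j) = 0`, where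
`χ_U(q_j^∨) = (1/|H|) ∑_{y ∈ H x_j H} χ_U(y⁻¹)` and
`χ_V(q_j) = (1/|H|) ∑_{y ∈ H x_j H} χ_V(y)`. -/
theorem hecke_orthogonality_of_not_iso {G U V : Type*} [Group G] [Fintype G]
    [AddCommGroup U] [Module ℂ U] [FiniteDimensional ℂ U]
    [AddCommGroup V] [Module ℂ V] [FiniteDimensional ℂ V]
    (ρU : Representation ℂ G U) (hirrU : IsIrreducibleRep ρU)
    (ρV : Representation ℂ G V) (hirrV : IsIrreducibleRep ρV)
    (hniso : ¬ ∃ f : U ≃ₗ[ℂ] V, ∀ (g : G) (u : U), f (ρU g u) = ρV g (f u))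
    (H : Subgroup G) (s : ℕ) (hs : 0 < s) (x : Fin s → G) (hx1 : x ⟨0, hs⟩ = 1)
    (hreps : ∀ g : G, ∃! i : Fin s, ∃ h ∈ H, ∃ h' ∈ H, g = h * x i * h') :
    ∑ j : Fin s,
        (interConjCard H (x j) : ℂ) *
          ((Nat.card H : ℂ)⁻¹ * ∑ y ∈ dosetFinset H (x j), repChar ρU y⁻¹) *
          ((Nat.card H : ℂ)⁻¹ * ∑ y ∈ dosetFinset H (x j), repChar ρV y) = 0 := by
  classical
  have key := char_twisted_orthogonal ρU hirrU ρV hirrV hniso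
  set c : ℂ := (Nat.card H : ℂ)⁻¹ with hc
  set W : G → ℂ := fun y => ∑ h : H, ∑ h' : H, repChar ρV ((h : G) * y * (h' : G)) with hW
  have hterm : ∀ j : Fin s,
      (interConjCard H (x j) : ℂ) *
          (c * ∑ y ∈ dosetFinset H (x j), repChar ρU y⁻¹) *
          (c * ∑ y ∈ dosetFinset H (x j), repChar ρV y)
        = (c * c) * ∑ y ∈ dosetFinset H (x j), repChar ρU y⁻¹ * W y := by
    intro j
    have hA := doset_double_sum H (x j) (repChar ρV)
    calc (interConjCard H (x j) : ℂ) *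
          (c * ∑ y ∈ dosetFinset H (x j), repChar ρU y⁻¹) *
          (c * ∑ y ∈ dosetFinset H (x j), repChar ρV y)
        = (c * c) * ∑ y ∈ dosetFinset H (x j), repChar ρU y⁻¹ *
            ((interConjCard H (x j) : ℂ) * ∑ z ∈ dosetFinset H (x j), repChar ρV z) := by
          rw [← Finset.sum_mul]; ring
      _ = (c * c) * ∑ y ∈ dosetFinset H (x j), repChar ρU y⁻¹ * W y := by
          congr 1
          refine Finset.sum_congr rfl fun y hy => ?_
          congr 1
          obtain ⟨a, ha, b, hb, rfl⟩ := mem_dosetFinset.mp hy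
          rw [← hA]
          exact (doset_sum_invariant H (x j) ha hb (repChar ρV)).symm
  have main2 : ∑ g : G, repChar ρU g⁻¹ * W g = 0 := by
    have hswap : ∑ g : G, repChar ρU g⁻¹ * W g
        = ∑ h : H, ∑ h' : H, ∑ g : G,
            repChar ρU g⁻¹ * repChar ρV ((h : G) * g * (h' : G)) := by
      simp_rw [hW, Finset.mul_sum]
      rw [Finset.sum_comm]
      exact Finset.sum_congr rfl fun h _ => Finset.sum_comm
    rw [hswap]
    refine Finset.sum_eq_zero fun h _ => Finset.sum_eq_zero fun h' _ => ?_
    rw [← key ((h : G) * (h' : G))]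
    refine Fintype.sum_equiv ((Equiv.mulLeft (h : G)).trans (Equiv.mulRight (h' : G))) _ _
      (fun g => ?_)
    simp only [Equiv.trans_apply, Equiv.coe_mulLeft, Equiv.coe_mulRight]
    congr 1
    have hg : (((h : G) * g * (h' : G))⁻¹ * ((h : G) * (h' : G)))
        = (h' : G)⁻¹ * (g⁻¹ * (h' : G)) := by group
    rw [hg, repChar_mul_comm]
    congr 1
    group
  calc ∑ j : Fin s,
        (interConjCard H (x j) : ℂ) *
          (c * ∑ y ∈ dosetFinset H (x j), repChar ρU y⁻¹) *
          (c * ∑ y ∈ dosetFinset H (x j), repChar ρV y)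
      = (c * c) * ∑ j : Fin s, ∑ y ∈ dosetFinset H (x j), repChar ρU y⁻¹ * W y := by
        rw [Finset.mul_sum]
        exact Finset.sum_congr rfl fun j _ => hterm j
    _ = (c * c) * ∑ g : G, repChar ρU g⁻¹ * W g := by
        rw [doset_partition H s x hreps (fun g => repChar ρU g⁻¹ * W g)]
    _ = 0 := by rw [main2, mul_zero]
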